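/- For the threshold CRD with reactions X_i → Y^L_{w_i} and Y^L_p + Y^?_q → (the appropriate clipped-sum products as defined), the function I(c) = Σ_i w_i·c(X_i) + Σ_{p=-s}^{s} p·c(Y^L_p) + Σ_{q=-s}^{s} q·c(Y^F_q) (an integer) is invariant under all forward and reverse reaction applications. -/

import Mathlib

/-! `Ithr` is additive in the configuration, so a step `x ↦ x - a + b` changes it by
`Ithr b - Ithr a`, and it suffices that every reaction conserves it. Each species a reaction
mentions has index in `[-s, s]`, the range `Ithr` sees, because `|wᵢ| < s` and clipping
rewrites `p + q` as `±s + (p + q ∓ s)` with both summands in range. -/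

section
variable (k : ℕ)

/-- Species: `Sum.inl i` is input `Xᵢ`; `Sum.inr (false, p)` is `Yᴸ_p`;
`Sum.inr (true, q)` is `Yᶠ_q`. -/
abbrev TSp (k : ℕ) := Fin k ⊕ (Bool × ℤ)

def single (x : TSp k) : TSp k → ℕ := fun t => if t = x then 1 else 0

/-- The cutoff `s = max(|w₁|,...,|w_k|,|t|) + 1`. -/
def cutoff (w : Fin k → ℤ) (t : ℤ) : ℤ :=
  (((Finset.univ.sup fun i => (w i).natAbs) ⊔ t.natAbs : ℕ) : ℤ) + 1

/-- Products of the reaction `Yᴸ_p + Y?_q → ...` with clipping at `±s`. -/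
def clip (s p q : ℤ) : TSp k → ℕ :=
  if p + q < -s then
    fun l => single k (Sum.inr (false, -s)) l + single k (Sum.inr (true, p + q + s)) l
  else if s < p + q then
    fun l => single k (Sum.inr (false, s)) l + single k (Sum.inr (true, p + q - s)) l
  else single k (Sum.inr (false, p + q))

/-- Reactions of the threshold CRD. -/
def Rthr (w : Fin k → ℤ) (t : ℤ) : Set ((TSp k → ℕ) × (TSp k → ℕ)) :=
  {r | (∃ i : Fin k, r = (single k (Sum.inl i), single k (Sum.inr (false, w i)))) ∨
       (∃ p q : ℤ, ∃ b : Bool, p ∈ Finset.Icc (-(cutoff k w t)) (cutoff k w t) ∧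
          q ∈ Finset.Icc (-(cutoff k w t)) (cutoff k w t) ∧
          r = (fun l => single k (Sum.inr (false, p)) l + single k (Sum.inr (b, q)) l,
               clip k (cutoff k w t) p q))}

def BiStep (R : Set ((TSp k → ℕ) × (TSp k → ℕ))) (x y : TSp k → ℕ) : Prop :=
  ∃ r ∈ R, ((∀ l, r.1 l ≤ x l) ∧ y = fun l => x l - r.1 l + r.2 l) ∨
           ((∀ l, r.2 l ≤ x l) ∧ y = fun l => x l - r.2 l + r.1 l)

/-- The linear invariant of the threshold CRD. -/
noncomputable def Ithr (w : Fin k → ℤ) (t : ℤ) (c : TSp k → ℕ) : ℤ :=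
  (∑ i : Fin k, w i * (c (Sum.inl i) : ℤ)) +
  (∑ p ∈ Finset.Icc (-(cutoff k w t)) (cutoff k w t), p * (c (Sum.inr (false, p)) : ℤ)) +
  (∑ q ∈ Finset.Icc (-(cutoff k w t)) (cutoff k w t), q * (c (Sum.inr (true, q)) : ℤ))

section Invariant

variable {k} (w : Fin k → ℤ) (t : ℤ)

lemma cutoff_pos : 0 < cutoff k w t := by
  unfold cutoff
  positivity

lemma abs_weight_lt_cutoff (i : Fin k) : |w i| < cutoff k w t := by
  have hi : (w i).natAbs ≤ (Finset.univ.sup fun j => (w j).natAbs) ⊔ t.natAbs :=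
    le_sup_of_le_left (Finset.le_sup (f := fun j => (w j).natAbs) (Finset.mem_univ i))
  rw [Int.abs_eq_natAbs, cutoff]
  omega

lemma Ithr_add (a b : TSp k → ℕ) :
    Ithr k w t (fun l => a l + b l) = Ithr k w t a + Ithr k w t b := by
  simp only [Ithr, Nat.cast_add, mul_add, Finset.sum_add_distrib]
  ring

lemma Ithr_sub_add {x a b : TSp k → ℕ} (h : ∀ l, a l ≤ x l) :
    Ithr k w t (fun l => x l - a l + b l) = Ithr k w t x - Ithr k w t a + Ithr k w t b := by
  have hcast : ∀ l, ((x l - a l + b l : ℕ) : ℤ) = x l - a l + b l := fun l => by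
    push_cast [h l]
    ring
  simp only [Ithr, hcast, mul_sub, mul_add, Finset.sum_add_distrib, Finset.sum_sub_distrib]
  ring

lemma Ithr_single_inl (i : Fin k) : Ithr k w t (single k (Sum.inl i)) = w i := by
  simp [Ithr, single]

lemma Ithr_single_inr (b : Bool) {p : ℤ} (hlo : -cutoff k w t ≤ p) (hhi : p ≤ cutoff k w t) :
    Ithr k w t (single k (Sum.inr (b, p))) = p := by
  cases b <;> simp [Ithr, single, hlo, hhi, Prod.ext_iff]

lemma Ithr_clip {p q : ℤ} (hp : -cutoff k w t ≤ p ∧ p ≤ cutoff k w t)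
    (hq : -cutoff k w t ≤ q ∧ q ≤ cutoff k w t) :
    Ithr k w t (clip k (cutoff k w t) p q) = p + q := by
  have hs := cutoff_pos w t
  unfold clip
  split_ifs <;> simp (disch := omega) only [Ithr_add, Ithr_single_inr] <;> ring

lemma Ithr_fst_eq_snd_of_mem_Rthr {r : (TSp k → ℕ) × (TSp k → ℕ)} (hr : r ∈ Rthr k w t) :
    Ithr k w t r.1 = Ithr k w t r.2 := by
  rcases hr with ⟨i, rfl⟩ | ⟨p, q, b, hp, hq, rfl⟩
  · have hi := abs_le.mp (abs_weight_lt_cutoff w t i).le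
    rw [Ithr_single_inl, Ithr_single_inr w t false hi.1 hi.2]
  · rw [Finset.mem_Icc] at hp hq
    rw [Ithr_add, Ithr_single_inr w t false hp.1 hp.2, Ithr_single_inr w t b hq.1 hq.2,
      Ithr_clip w t hp hq]

lemma Ithr_eq_of_biStep {R : Set ((TSp k → ℕ) × (TSp k → ℕ))}
    (hR : ∀ r ∈ R, Ithr k w t r.1 = Ithr k w t r.2) {x y : TSp k → ℕ} (h : BiStep k R x y) :
    Ithr k w t y = Ithr k w t x := by
  obtain ⟨r, hr, ⟨hle, rfl⟩ | ⟨hle, rfl⟩⟩ := h <;>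
  · rw [Ithr_sub_add w t hle, hR r hr]
    ring

end Invariant

theorem threshold_invariant (w : Fin k → ℤ) (t : ℤ)
    (x y : TSp k → ℕ) (h : BiStep k (Rthr k w t) x y) :
    Ithr k w t y = Ithr k w t x :=
  Ithr_eq_of_biStep w t (fun _ => Ithr_fst_eq_snd_of_mem_Rthr w t) h

end
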